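/- arXiv:math/0102082 — 3 statements merged into one kernel-verified Lean document; each statement's English description precedes it below -/
import Mathlib

section
/- For every u ∈ A and every basis index k one has Gram(u * u * T_k) = Gram(u) * g⁻¹ * Gram(T_k) * g⁻¹ * Gram(u). (With u = exp(Σ y_i T_i) this is the paper's identity γ_k^{ij} = Σ_{e,f} φ^i_e g_k^{ef} φ_f^j, after raising indices by g⁻¹ on both sides.) -/
/-!
Expanding `a * T i` in the basis gives `Gram a = (L a)ᵀ * g`, where `L` is the left regular
representation. Hence `a ↦ Gram a * g⁻¹ = (L a)ᵀ` is a ring homomorphism (`A` being commutative),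
which is the identity `Gram (x * y) = Gram x * g⁻¹ * Gram y`; apply it twice to `u * (T k * u)`.
-/

open Matrix

namespace Algebra

variable {R A ι : Type*} [Fintype ι] [DecidableEq ι]

noncomputable def gramMatrix [CommSemiring R] [Semiring A] [Algebra R A] (b : Module.Basis ι R A)
    (τ : A →ₗ[R] R) (a : A) : Matrix ι ι R :=
  Matrix.of fun i j => τ (a * b i * b j)

theorem gramMatrix_eq_transpose_leftMulMatrix_mul [CommSemiring R] [Semiring A] [Algebra R A]
    (b : Module.Basis ι R A) (τ : A →ₗ[R] R) (a : A) :
    gramMatrix b τ a = (leftMulMatrix b a)ᵀ * gramMatrix b τ 1 := by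
  ext i j
  have expand : a * b i = ∑ e, leftMulMatrix b a e i • b e := by
    simp only [leftMulMatrix_eq_repr_mul, b.sum_repr]
  simp only [gramMatrix, of_apply, mul_apply, transpose_apply, one_mul, expand, Finset.sum_mul,
    smul_mul_assoc, map_sum, map_smul, smul_eq_mul]

theorem gramMatrix_mul [CommRing R] [CommRing A] [Algebra R A]
    (b : Module.Basis ι R A) (τ : A →ₗ[R] R) (hg : IsUnit (gramMatrix b τ 1)) (x y : A) :
    gramMatrix b τ (x * y) = gramMatrix b τ x * (gramMatrix b τ 1)⁻¹ * gramMatrix b τ y := by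
  set g := gramMatrix b τ 1
  have hgg : g * g⁻¹ = 1 := mul_nonsing_inv g ((isUnit_iff_isUnit_det g).mp hg)
  calc gramMatrix b τ (x * y)
      = (leftMulMatrix b y * leftMulMatrix b x)ᵀ * g := by
        rw [gramMatrix_eq_transpose_leftMulMatrix_mul, mul_comm, map_mul]
    _ = (leftMulMatrix b x)ᵀ * (g * g⁻¹) * ((leftMulMatrix b y)ᵀ * g) := by
        rw [hgg, Matrix.mul_one, transpose_mul, Matrix.mul_assoc]
    _ = gramMatrix b τ x * g⁻¹ * gramMatrix b τ y := by
        rw [gramMatrix_eq_transpose_leftMulMatrix_mul b τ x,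
          gramMatrix_eq_transpose_leftMulMatrix_mul b τ y, Matrix.mul_assoc _ g]

end Algebra

/-- With `Gram a i j = τ (a * Tᵢ * Tⱼ)` and `g = Gram 1` invertible, for every
`u ∈ A` and every basis index `k` one has
`Gram (u * u * T k) = Gram u * g⁻¹ * Gram (T k) * g⁻¹ * Gram u`. -/
theorem gram_sq_mul_basis
    {R : Type*} [CommRing R] {A : Type*} [CommRing A] [Algebra R A]
    {r : ℕ} (T : Module.Basis (Fin (r + 1)) R A) (τ : A →ₗ[R] R)
    (Gram : A → Matrix (Fin (r + 1)) (Fin (r + 1)) R)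
    (hGram : ∀ a i j, Gram a i j = τ (a * T i * T j))
    (g : Matrix (Fin (r + 1)) (Fin (r + 1)) R) (hg : g = Gram 1)
    (hinv : IsUnit g)
    (u : A) (k : Fin (r + 1)) :
    Gram (u * u * T k) = Gram u * g⁻¹ * Gram (T k) * g⁻¹ * Gram u := by
  have hGram' : Gram = Algebra.gramMatrix T τ := funext fun a => Matrix.ext (hGram a)
  subst hGram' hg
  rw [show u * u * T k = u * (T k * u) by ring, Algebra.gramMatrix_mul T τ hinv,
    Algebra.gramMatrix_mul T τ hinv]
  simp only [Matrix.mul_assoc]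
end

section
/- Define P¹ := Γ_{x₁}·Γ_{x₂} + y₁·Γ_{x₂}² and P² := (1/2)·Γ_{x₂}² in ℚ[[x₁,x₂,y₁,y₂]]. Then after the substitution (x₁,x₂,y₁,y₂) = (s, u+v, v, w) one has the identities in ℚ[[s,u,v,w]]: ∂²/∂s² of (P¹ after substitution) = G_{us}·G_{ss} + G_{uss}·G_s + G_u·(L G_{ss}) + G_{us}·(L G_s), and ∂²/∂s² of (P² after substitution) = G_{us}·G_{us} + G_{uss}·G_u. (These are the paper's Equations (P1forP2) and (P2forP2): the expressions of the Π-class potentials P¹ = (1/2)Σ Γ_{x_e} γ₁^{ef} Γ_{x_f} and P² = (1/2)Σ Γ_{x_e} γ₂^{ef} Γ_{x_f} of P² in terms of the characteristic number potential.) -/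
/-- Formal partial derivative of a multivariate power series with respect to the `i`-th
variable: the coefficient at a monomial `m` is `(m i + 1)` times the coefficient at
`m + eᵢ`. -/
noncomputable def pd {n : ℕ} (i : Fin n) (F : MvPowerSeries (Fin n) ℚ) :
    MvPowerSeries (Fin n) ℚ :=
  fun m => ((m i : ℚ) + 1) * MvPowerSeries.coeff (R := ℚ) (m + Finsupp.single i 1) F

/-- Substitution `(x₁,x₂,y₁,y₂) = (s, u+v, v, w)` turning a power series
`Γ ∈ ℚ[[x₁,x₂,y₁,y₂]]` into `G = Γ(s, u+v, v, w) ∈ ℚ[[s,u,v,w]]` (variables of the source are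
indexed `x₁,x₂,y₁,y₂ = 0,1,2,3` and of the target `s,u,v,w = 0,1,2,3`):  the coefficient of
`G` at `s^a u^b v^c w^d` is `∑_{k=0}^{c} binom(b+k, b) · (coeff of Γ at x₁^a x₂^{b+k}
y₁^{c-k} y₂^d)`, coming from the expansion of `(u+v)^{b+k}`. -/
noncomputable def substP2 (Γ : MvPowerSeries (Fin 4) ℚ) : MvPowerSeries (Fin 4) ℚ :=
  fun m => ∑ k ∈ Finset.range (m 2 + 1),
    (Nat.choose (m 1 + k) (m 1) : ℚ) *
      MvPowerSeries.coeff (R := ℚ)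
        (Finsupp.single 0 (m 0) + Finsupp.single 1 (m 1 + k) +
         Finsupp.single 2 (m 2 - k) + Finsupp.single 3 (m 3)) Γ

/-- The operator `L = ∂/∂s + 2v ∂/∂u` on `ℚ[[s,u,v,w]]` (variables `s,u,v,w = 0,1,2,3`). -/
noncomputable def Lop (F : MvPowerSeries (Fin 4) ℚ) : MvPowerSeries (Fin 4) ℚ :=
  pd 0 F + 2 * MvPowerSeries.X 2 * pd 1 F

/-- The operator `P = 2v ∂/∂s + (2v²+2w) ∂/∂u` on `ℚ[[s,u,v,w]]`. -/
noncomputable def Pop (F : MvPowerSeries (Fin 4) ℚ) : MvPowerSeries (Fin 4) ℚ :=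
  2 * MvPowerSeries.X 2 * pd 0 F +
    (2 * MvPowerSeries.X 2 ^ 2 + 2 * MvPowerSeries.X 3) * pd 1 F

/-!
The substitution `substP2` is Mathlib's `MvPowerSeries.subst` along `(s, u + v, v, w)`: the
coefficient formula defining it is what the binomial expansion of `(u + v)^b` produces. Hence it
is a ring homomorphism fixing `v`, and it commutes with `∂/∂s` and `∂/∂u` (chain rule: `G_s` and
`G_u` are the substitutions of `Γ_{x₁}` and `Γ_{x₂}`). So the substituted potentials are
`G_s G_u + v G_u²` and `½ G_u²`, and both identities follow from the Leibniz rule and the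
commutation of partial derivatives.
-/

open MvPowerSeries Finset
open Finsupp (single single_eq_of_ne)

theorem MvPowerSeries.pderiv_comm {σ R : Type*} [CommSemiring R] (i j : σ)
    (f : MvPowerSeries σ R) : pderiv R i (pderiv R j f) = pderiv R j (pderiv R i f) := by
  rcases eq_or_ne i j with rfl | hij
  · rfl
  ext n
  simp only [coeff_pderiv, Finsupp.add_apply, single_eq_of_ne hij, single_eq_of_ne hij.symm,
    add_zero, add_right_comm n (single i 1)]
  ring

lemma pd_eq_pderiv {n : ℕ} (i : Fin n) : pd i = pderiv ℚ i := by
  funext F; ext m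
  rw [coeff_pderiv, mul_comm]; rfl

lemma fin4_finsupp_eq_iff (x : Fin 4 →₀ ℕ) (a b c d : ℕ) :
    x = single 0 a + single 1 b + single 2 c + single 3 d ↔
      x 0 = a ∧ x 1 = b ∧ x 2 = c ∧ x 3 = d := by
  constructor
  · rintro rfl; simp
  · rintro ⟨rfl, rfl, rfl, rfl⟩
    ext i; fin_cases i <;> simp

noncomputable def substP2Family : Fin 4 → MvPowerSeries (Fin 4) ℚ := ![X 0, X 1 + X 2, X 2, X 3]

lemma hasSubst_substP2Family : HasSubst substP2Family :=
  hasSubst_of_constantCoeff_zero fun s => by fin_cases s <;> simp [substP2Family]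

lemma prod_substP2Family_eq_sum (d : Fin 4 →₀ ℕ) :
    (d.prod fun s e => substP2Family s ^ e) = ∑ j ∈ range (d 1 + 1),
      monomial (single 0 (d 0) + single 1 j + single 2 (d 1 - j + d 2) + single 3 (d 3))
        ((d 1).choose j : ℚ) := by
  rw [Finsupp.prod_fintype _ _ (by simp), Fin.prod_univ_four]
  simp only [substP2Family, Matrix.cons_val]
  rw [add_pow, Finset.mul_sum, Finset.sum_mul, Finset.sum_mul]
  refine sum_congr rfl fun j _ => ?_
  have hcast : ((d 1).choose j : MvPowerSeries (Fin 4) ℚ) = monomial 0 ((d 1).choose j : ℚ) :=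
    rfl
  simp only [hcast, X_pow_eq, monomial_mul_monomial, one_mul, mul_one]
  congr 2
  ext i; fin_cases i <;> simp

lemma coeff_prod_substP2Family (m d : Fin 4 →₀ ℕ) :
    coeff m (d.prod fun s e => substP2Family s ^ e) =
      if d 0 = m 0 ∧ d 3 = m 3 ∧ m 1 ≤ d 1 ∧ d 1 + d 2 = m 1 + m 2 then
        ((d 1).choose (m 1) : ℚ) else 0 := by
  classical
  rw [prod_substP2Family_eq_sum, map_sum]
  simp only [coeff_monomial, fin4_finsupp_eq_iff]
  rw [sum_eq_single (m 1)]
  · by_cases h : m 1 ≤ d 1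
    · exact if_congr (by omega) rfl rfl
    · simp [Nat.choose_eq_zero_of_lt (not_le.mp h)]
  · intro j _ hj
    exact if_neg fun h => hj h.2.1.symm
  · intro h
    simp only [mem_range, not_lt] at h
    simp [Nat.choose_eq_zero_of_lt (show d 1 < m 1 by omega)]

noncomputable def substP2Index (m : Fin 4 →₀ ℕ) (k : ℕ) : Fin 4 →₀ ℕ :=
  single 0 (m 0) + single 1 (m 1 + k) + single 2 (m 2 - k) + single 3 (m 3)

lemma eq_substP2Index_iff (d m : Fin 4 →₀ ℕ) (k : ℕ) :
    d = substP2Index m k ↔ d 0 = m 0 ∧ d 1 = m 1 + k ∧ d 2 = m 2 - k ∧ d 3 = m 3 :=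
  fin4_finsupp_eq_iff ..

lemma substP2Index_add_single_zero (m : Fin 4 →₀ ℕ) (k : ℕ) :
    substP2Index (m + single 0 1) k = substP2Index m k + single 0 1 := by
  ext i; fin_cases i <;> simp [substP2Index]

lemma substP2Index_add_single_one (m : Fin 4 →₀ ℕ) (k : ℕ) :
    substP2Index (m + single 1 1) k = substP2Index m k + single 1 1 := by
  ext i; fin_cases i <;> simp [substP2Index]; ring

lemma coeff_substP2 (Γ : MvPowerSeries (Fin 4) ℚ) (m : Fin 4 →₀ ℕ) :
    coeff m (substP2 Γ) =
      ∑ k ∈ range (m 2 + 1), ((m 1 + k).choose (m 1) : ℚ) * coeff (substP2Index m k) Γ :=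
  rfl

lemma substP2_eq_subst (Γ : MvPowerSeries (Fin 4) ℚ) : substP2 Γ = subst substP2Family Γ := by
  ext m
  rw [coeff_subst hasSubst_substP2Family, coeff_substP2]
  simp only [coeff_prod_substP2Family, smul_eq_mul, mul_ite, mul_zero]
  rw [finsum_eq_sum_of_support_subset (s := (range (m 2 + 1)).image (substP2Index m)), sum_image]
  · refine sum_congr rfl fun k hk => ?_
    obtain ⟨h0, h1, h2, h3⟩ := (eq_substP2Index_iff _ m k).1 rfl
    rw [mem_range] at hk
    rw [if_pos (by omega), mul_comm, h1]
  · intro k _ k' _ hkk'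
    have := ((eq_substP2Index_iff _ m k).1 hkk'.symm).2.1
    obtain ⟨-, h1, -⟩ := (eq_substP2Index_iff _ m k').1 rfl
    omega
  · intro d hd
    rw [Function.mem_support, ne_eq, ite_eq_right_iff, Classical.not_imp] at hd
    obtain ⟨⟨h0, h3, h1, h12⟩, -⟩ := hd
    simp only [coe_image, coe_range, Set.mem_image, Set.mem_Iio]
    refine ⟨d 1 - m 1, by omega, ?_⟩
    exact ((eq_substP2Index_iff d m _).2 ⟨h0, by omega, by omega, h3⟩).symm

lemma pd_zero_substP2 (F : MvPowerSeries (Fin 4) ℚ) : pd 0 (substP2 F) = substP2 (pd 0 F) := by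
  ext m
  simp only [pd_eq_pderiv, coeff_pderiv, coeff_substP2, Finset.sum_mul,
    substP2Index_add_single_zero]
  refine sum_congr (by simp) fun k _ => ?_
  obtain ⟨h0, -⟩ := (eq_substP2Index_iff _ m k).1 rfl
  simp only [Finsupp.add_apply, h0, single_eq_of_ne one_ne_zero, add_zero]
  ring

lemma pd_one_substP2 (F : MvPowerSeries (Fin 4) ℚ) : pd 1 (substP2 F) = substP2 (pd 1 F) := by
  ext m
  simp only [pd_eq_pderiv, coeff_pderiv, coeff_substP2, Finset.sum_mul,
    substP2Index_add_single_one]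
  refine sum_congr (by simp) fun k _ => ?_
  obtain ⟨-, h1, -⟩ := (eq_substP2Index_iff _ m k).1 rfl
  have hchoose : ((m 1 + k + 1 : ℕ) : ℚ) * (m 1 + k).choose (m 1) =
      (m 1 + 1 + k).choose (m 1 + 1) * (m 1 + 1 : ℕ) := by
    rw [add_right_comm (m 1) 1 k]; exact_mod_cast Nat.add_one_mul_choose_eq (m 1 + k) (m 1)
  simp only [Finsupp.add_apply, h1, Finsupp.single_eq_same, Nat.cast_add, Nat.cast_one]
    at hchoose ⊢
  linear_combination (coeff (substP2Index m k + single 1 1) F) * hchoose.symm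

lemma pd_zero_pd_zero_potential_one (G : MvPowerSeries (Fin 4) ℚ) :
    pd 0 (pd 0 (pd 0 G * pd 1 G + X 2 * pd 1 G ^ 2)) =
      pd 1 (pd 0 G) * pd 0 (pd 0 G) + pd 1 (pd 0 (pd 0 G)) * pd 0 G
        + pd 1 G * Lop (pd 0 (pd 0 G)) + pd 1 (pd 0 G) * Lop (pd 0 G) := by
  simp only [Lop, pd_eq_pderiv, map_add, sq, Derivation.leibniz, smul_eq_mul, map_zero,
    pderiv_X_of_ne (show (2 : Fin 4) ≠ 0 by decide), pderiv_comm (σ := Fin 4) (R := ℚ) 1 0]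
  ring

lemma pd_zero_pd_zero_potential_two (G : MvPowerSeries (Fin 4) ℚ) :
    pd 0 (pd 0 (C (1 / 2 : ℚ) * pd 1 G ^ 2)) =
      pd 1 (pd 0 G) * pd 1 (pd 0 G) + pd 1 (pd 0 (pd 0 G)) * pd 1 G := by
  simp only [pd_eq_pderiv, sq, Derivation.leibniz, smul_eq_mul, map_add, map_zero, pderiv_C,
    pderiv_comm (σ := Fin 4) (R := ℚ) 1 0]
  have hC : C (1 / 2 : ℚ) * 2 = (1 : MvPowerSeries (Fin 4) ℚ) := by
    rw [← map_ofNat C 2, ← map_mul]; norm_num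
  linear_combination (pderiv ℚ 0 (pderiv ℚ 0 (pderiv ℚ 1 G)) * pderiv ℚ 1 G
    + pderiv ℚ 0 (pderiv ℚ 1 G) * pderiv ℚ 0 (pderiv ℚ 1 G)) * hC

/-- With `P¹ = Γ_{x₁}Γ_{x₂} + y₁Γ_{x₂}²` and `P² = (1/2)Γ_{x₂}²` in
`ℚ[[x₁,x₂,y₁,y₂]]`, after the substitution `(x₁,x₂,y₁,y₂) = (s,u+v,v,w)` one has
`(P¹ substituted)_{ss} = G_{us}G_{ss} + G_{uss}G_s + G_u·(L G_{ss}) + G_{us}·(L G_s)` and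
`(P² substituted)_{ss} = G_{us}G_{us} + G_{uss}G_u`, where `G = Γ(s,u+v,v,w)`.
These are the paper's Equations (P1forP2) and (P2forP2). -/
theorem P_potentials_P2
    (Γ P1 P2 : MvPowerSeries (Fin 4) ℚ)
    (hP1 : P1 = pd 0 Γ * pd 1 Γ + MvPowerSeries.X 2 * (pd 1 Γ) ^ 2)
    (hP2 : P2 = (MvPowerSeries.C (σ := Fin 4) (R := ℚ) (1 / 2)) * (pd 1 Γ) ^ 2)
    (G : MvPowerSeries (Fin 4) ℚ) (hG : G = substP2 Γ) :
    pd 0 (pd 0 (substP2 P1)) =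
        pd 1 (pd 0 G) * pd 0 (pd 0 G) + pd 1 (pd 0 (pd 0 G)) * pd 0 G
          + pd 1 G * Lop (pd 0 (pd 0 G)) + pd 1 (pd 0 G) * Lop (pd 0 G) ∧
    pd 0 (pd 0 (substP2 P2)) =
        pd 1 (pd 0 G) * pd 1 (pd 0 G) + pd 1 (pd 0 (pd 0 G)) * pd 1 G := by
  have ha := hasSubst_substP2Family
  subst hP1 hP2 hG
  rw [substP2_eq_subst (_ + _), substP2_eq_subst (_ * _)]
  simp only [subst_add ha, subst_mul ha, subst_pow ha, subst_X ha, subst_C,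
    show substP2Family 2 = X 2 from rfl, ← substP2_eq_subst, ← pd_zero_substP2,
    ← pd_one_substP2]
  exact ⟨pd_zero_pd_zero_potential_one _, pd_zero_pd_zero_potential_two _⟩
end

section
/- Let N, T, C : ℕ × ℕ → ℚ, and for (m,n) write d := m + n, and let S denote summation over all ordered splittings m = m' + m'', n = n' + n'' with m' + n' ≥ 1 and m'' + n'' ≥ 1, writing d' := m' + n' and d'' := m'' + n''. Assume for every (m,n) with d ≥ 1: (i) d·T(m,n) = (2d−2)·N(m,n) + S[ binomial(2d−2, 2d'−1)·d'·d''·m'·n''·N(m',n')·N(m'',n'') ], and (ii) C(m,n) = 2·T(m,n) − 2·S[ binomial(2d−2, 2d'−1)·m'·n''·N(m',n')·N(m'',n'') ]. Then for every (m,n) with d ≥ 1: d·C(m,n) = 4(d−1)·N(m,n) + S[ binomial(2d−2, 2d'−1)·(m'·n'' + n'·m'')·(d'·d'' − d)·N(m',n')·N(m'',n'') ]. (This is Example 4.6 of the paper: the closed formula for the numbers C_{(m,n)} of irreducible cuspidal rational curves of bi-degree (m,n) in P¹×P¹ through 2m+2n−2 general points in terms of the numbers N_{(m,n)} of nodal ones,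 where (i) is the coefficient form of the topological recursion for the tangency numbers T and (ii) is the coefficient form of the cusp equation at v = w = 0.) -/
/-- Sum over all ordered splittings `m = m' + m''`, `n = n' + n''` with `m' + n' ≥ 1` and
`m'' + n'' ≥ 1`, of `f m' n' m'' n''`. -/
noncomputable def splitSum (m n : ℕ) (f : ℕ → ℕ → ℕ → ℕ → ℚ) : ℚ :=
  ∑ p ∈ (Finset.range (m + 1) ×ˢ Finset.range (n + 1)).filter
      (fun p => 1 ≤ p.1 + p.2 ∧ 1 ≤ (m - p.1) + (n - p.2)),
    f p.1 p.2 (m - p.1) (n - p.2)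

/-!
Substituting the tangency recursion (i) into the cusp equation (ii) gives
`d·C = 4(d−1)·N + 2·S[binom·m'·n''·(d'·d'' − d)·N'·N'']`. The involution
`(m', n', m'', n'') ↦ (m'', n'', m', n'')` of the splittings fixes the binomial weight, since
`(2d' − 1) + (2d'' − 1) = 2d − 2`, and turns `m'·n''` into `n'·m''`; so the factor `2·m'·n''`
may be replaced by `m'·n'' + n'·m''`.
-/

section splitSum

variable {m n : ℕ}

theorem splitSum_congr {f g : ℕ → ℕ → ℕ → ℕ → ℚ}
    (h : ∀ a b c d, a + c = m → b + d = n → 1 ≤ a + b → 1 ≤ c + d → f a b c d = g a b c d) :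
    splitSum m n f = splitSum m n g :=
  Finset.sum_congr rfl fun p hp => by
    simp only [Finset.mem_filter, Finset.mem_product, Finset.mem_range] at hp
    exact h _ _ _ _ (by omega) (by omega) hp.2.1 hp.2.2

theorem splitSum_add (f g : ℕ → ℕ → ℕ → ℕ → ℚ) :
    splitSum m n (fun a b c d => f a b c d + g a b c d) = splitSum m n f + splitSum m n g :=
  Finset.sum_add_distrib

theorem splitSum_swap (f : ℕ → ℕ → ℕ → ℕ → ℚ) :
    splitSum m n (fun a b c d => f c d a b) = splitSum m n f := by
  refine Finset.sum_nbij' (fun p => (m - p.1, n - p.2)) (fun p => (m - p.1, n - p.2))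
    ?_ ?_ ?_ ?_ ?_
  all_goals
    intro p hp
    simp only [Finset.mem_filter, Finset.mem_product, Finset.mem_range] at hp ⊢
  · omega
  · omega
  · ext <;> simp only <;> omega
  · ext <;> simp only <;> omega
  · rw [Nat.sub_sub_self (by omega), Nat.sub_sub_self (by omega)]

theorem splitSum_add_swap (f : ℕ → ℕ → ℕ → ℕ → ℚ) :
    splitSum m n (fun a b c d => f a b c d + f c d a b) = 2 * splitSum m n f := by
  rw [splitSum_add, splitSum_swap, two_mul]

end splitSum

theorem splitSum_cusp_weight (N : ℕ × ℕ → ℚ) (m n : ℕ) :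
    splitSum m n (fun m' n' m'' n'' =>
      (Nat.choose (2 * (m + n) - 2) (2 * (m' + n') - 1) : ℚ) *
        ((m' : ℚ) * (n'' : ℚ) + (n' : ℚ) * (m'' : ℚ)) *
        ((m' + n' : ℚ) * (m'' + n'' : ℚ) - (m + n : ℚ)) * N (m', n') * N (m'', n'')) =
      2 * splitSum m n (fun m' n' m'' n'' =>
          (Nat.choose (2 * (m + n) - 2) (2 * (m' + n') - 1) : ℚ) *
            (m' + n' : ℚ) * (m'' + n'' : ℚ) * (m' : ℚ) * (n'' : ℚ) * N (m', n') * N (m'', n'')) -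
        2 * (m + n : ℚ) * splitSum m n (fun m' n' m'' n'' =>
          (Nat.choose (2 * (m + n) - 2) (2 * (m' + n') - 1) : ℚ) *
            (m' : ℚ) * (n'' : ℚ) * N (m', n') * N (m'', n'')) := by
  let F : ℕ → ℕ → ℕ → ℕ → ℚ := fun a b c d =>
    (Nat.choose (2 * (m + n) - 2) (2 * (a + b) - 1) : ℚ) * a * d *
      ((a + b) * (c + d) - (m + n)) * N (a, b) * N (c, d)
  calc _ = splitSum m n (fun a b c d => F a b c d + F c d a b) := by
        refine splitSum_congr fun a b c d hm hn hab hcd => ?_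
        simp only [F]
        rw [Nat.choose_symm_of_eq_add (a := 2 * (c + d) - 1) (b := 2 * (a + b) - 1) (by omega)]
        ring
    _ = 2 * splitSum m n F := splitSum_add_swap F
    _ = _ := by
        simp only [splitSum, Finset.mul_sum, ← Finset.sum_sub_distrib]
        exact Finset.sum_congr rfl fun _ _ => by ring

/-- Example 4.6 of the paper: Let `N, T, C : ℕ × ℕ → ℚ` and write `d = m + n`,
`d' = m' + n'`, `d'' = m'' + n''`.  Assume, for every `(m,n)` with `d ≥ 1`,
(i) `d·T(m,n) = (2d−2)·N(m,n)
      + Σ binom(2d−2, 2d'−1)·d'·d''·m'·n''·N(m',n')·N(m'',n'')`, and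
(ii) `C(m,n) = 2·T(m,n) − 2·Σ binom(2d−2, 2d'−1)·m'·n''·N(m',n')·N(m'',n'')`,
the sums being over ordered splittings `m = m' + m''`, `n = n' + n''` with `d', d'' ≥ 1`.
Then for every `(m,n)` with `d ≥ 1`:
`d·C(m,n) = 4(d−1)·N(m,n)
   + Σ binom(2d−2, 2d'−1)·(m'·n'' + n'·m'')·(d'·d'' − d)·N(m',n')·N(m'',n'')`. -/
theorem cuspidal_numbers_P1xP1
    (N T C : ℕ × ℕ → ℚ)
    (hT : ∀ m n : ℕ, 1 ≤ m + n →
      (m + n : ℚ) * T (m, n) =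
        (2 * (m + n : ℚ) - 2) * N (m, n) +
          splitSum m n (fun m' n' m'' n'' =>
            (Nat.choose (2 * (m + n) - 2) (2 * (m' + n') - 1) : ℚ) *
              (m' + n' : ℚ) * (m'' + n'' : ℚ) * (m' : ℚ) * (n'' : ℚ) *
              N (m', n') * N (m'', n'')))
    (hC : ∀ m n : ℕ, 1 ≤ m + n →
      C (m, n) =
        2 * T (m, n) -
          2 * splitSum m n (fun m' n' m'' n'' =>
            (Nat.choose (2 * (m + n) - 2) (2 * (m' + n') - 1) : ℚ) *
              (m' : ℚ) * (n'' : ℚ) * N (m', n') * N (m'', n''))) :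
    ∀ m n : ℕ, 1 ≤ m + n →
      (m + n : ℚ) * C (m, n) =
        4 * ((m + n : ℚ) - 1) * N (m, n) +
          splitSum m n (fun m' n' m'' n'' =>
            (Nat.choose (2 * (m + n) - 2) (2 * (m' + n') - 1) : ℚ) *
              ((m' : ℚ) * (n'' : ℚ) + (n' : ℚ) * (m'' : ℚ)) *
              ((m' + n' : ℚ) * (m'' + n'' : ℚ) - (m + n : ℚ)) *
              N (m', n') * N (m'', n'')) := by
  intro m n hd
  rw [hC m n hd, splitSum_cusp_weight]
  linear_combination 2 * hT m n hd
end
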